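/- arXiv:1310.1910 — 4 statements merged into one kernel-verified Lean document; each statement's English description precedes it below -/
import Mathlib

section
/- A monic polynomial with integer coefficients all of whose complex roots lie in the closed unit disk factors as a product of cyclotomic polynomials and a power of T; equivalently, every nonzero root is a root of unity. -/
open Polynomial

theorem Polynomial.Monic.mahlerMeasure_eq_one {p : ℂ[X]} (hp : p.Monic)
    (hroots : ∀ z ∈ p.roots, ‖z‖ ≤ 1) : p.mahlerMeasure = 1 := by
  rw [mahlerMeasure_eq_leadingCoeff_mul_prod_roots, hp.leadingCoeff, norm_one, one_mul]
  exact Multiset.prod_eq_one fun x hx => by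
    obtain ⟨z, hz, rfl⟩ := Multiset.mem_map.mp hx
    exact max_eq_left (hroots z hz)

/-- Kronecker's theorem: a monic integer polynomial all of whose complex roots
lie in the closed unit disk has every nonzero root a root of unity. -/
theorem kronecker_roots_of_unity (f : Polynomial ℤ) (hf : f.Monic)
    (hroots : ∀ z : ℂ, Polynomial.aeval z f = 0 → ‖z‖ ≤ 1) :
    ∀ z : ℂ, Polynomial.aeval z f = 0 → z ≠ 0 → ∃ k : ℕ, 0 < k ∧ z ^ k = 1 := by
  intro z hz hz₀
  have hmem : ∀ w, w ∈ f.aroots ℂ ↔ aeval w f = 0 := fun w => by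
    rw [mem_aroots, and_iff_right hf.ne_zero]
  have hM : (f.map (Int.castRingHom ℂ)).mahlerMeasure = 1 :=
    (hf.map _).mahlerMeasure_eq_one fun w hw => hroots w ((hmem w).mp hw)
  exact pow_eq_one_of_mahlerMeasure_eq_one hM hz₀ ((hmem z).mpr hz)
end

section
/- Let p, q be polynomials with p(T²) = T^{deg q} q(T + T^{−1}) and p self-reciprocal. Then all roots of p lie in S¹ ∪ ℝ₊ if and only if all roots of q are real. -/
/-!
A root `μ ≠ 0` of `p` is `z²` for some `z ≠ 0`, and then `q(z + z⁻¹) = 0`; conversely every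
root of `q` has the form `z + z⁻¹`, and `p(z²) = 0`. Self-reciprocity excludes `μ = 0`.
So the claim reduces to the pointwise fact that, for `z ≠ 0`, `z + z⁻¹` is real exactly when
`z` is real or `|z| = 1`, i.e. exactly when `z² ∈ S¹ ∪ ℝ₊`.
-/

open Polynomial

namespace Polynomial

variable {K : Type*} [Field K]

theorem eval_reverse_of_ne_zero (p : K[X]) {z : K} (hz : z ≠ 0) :
    p.reverse.eval z = z ^ p.natDegree * p.eval z⁻¹ := by
  let _ : Invertible z⁻¹ := invertibleOfNonzero (inv_ne_zero hz)
  have h := eval₂_reverse_mul_pow (RingHom.id K) z⁻¹ p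
  rw [invOf_eq_inv, inv_inv] at h
  rw [eval, eval, ← h, mul_left_comm, ← mul_pow, mul_inv_cancel₀ hz, one_pow, mul_one]

theorem reverse_eq_self_of_eval_inv [Infinite K] {p : K[X]}
    (hself : ∀ z : K, z ≠ 0 → z ^ p.natDegree * p.eval z⁻¹ = p.eval z) :
    p.reverse = p :=
  eq_of_infinite_eval_eq _ _ <| (Set.finite_singleton (0 : K)).infinite_compl.mono
    fun z hz => (eval_reverse_of_ne_zero p hz).trans (hself z hz)

theorem eval_zero_ne_zero_of_reverse_eq_self {p : K[X]} (hp : p ≠ 0) (hrev : p.reverse = p) :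
    p.eval 0 ≠ 0 := by
  rw [← coeff_zero_eq_eval_zero, ← hrev, coeff_zero_reverse]
  exact leadingCoeff_ne_zero.mpr hp

end Polynomial

theorem IsAlgClosed.exists_add_inv_eq {K : Type*} [Field K] [IsAlgClosed K] (w : K) :
    ∃ z : K, z ≠ 0 ∧ z + z⁻¹ = w := by
  obtain ⟨z, hz⟩ := IsAlgClosed.exists_root (C 1 * X ^ 2 + C (-w) * X + C 1)
    (by rw [degree_quadratic one_ne_zero]; norm_num)
  simp only [IsRoot, eval_add, eval_mul, eval_pow, eval_C, eval_X, one_mul] at hz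
  have hz0 : z ≠ 0 := by rintro rfl; simp at hz
  exact ⟨z, hz0, by field_simp; linear_combination hz⟩

namespace Complex

theorem im_add_inv_eq_zero_iff (z : ℂ) : (z + z⁻¹).im = 0 ↔ z.im = 0 ∨ ‖z‖ = 1 := by
  by_cases hz : z = 0
  · simp [hz]
  have hns : normSq z ≠ 0 := normSq_eq_zero.not.mpr hz
  have key : (z + z⁻¹).im = z.im * (normSq z - 1) / normSq z := by
    rw [add_im, inv_im]
    field_simp
    ring
  rw [key, div_eq_zero_iff, or_iff_left hns, mul_eq_zero, sub_eq_zero, normSq_eq_norm_sq,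
    pow_eq_one_iff_of_nonneg (norm_nonneg z) two_ne_zero]

theorem sq_mem_circle_or_posReal_iff {z : ℂ} (hz : z ≠ 0) :
    (‖z ^ 2‖ = 1 ∨ ((z ^ 2).im = 0 ∧ 0 < (z ^ 2).re)) ↔ z.im = 0 ∨ ‖z‖ = 1 := by
  rw [norm_pow, pow_eq_one_iff_of_nonneg (norm_nonneg z) two_ne_zero, or_comm]
  refine or_congr_left ⟨fun ⟨him, hre⟩ => ?_, fun him => ?_⟩
  · simp only [sq, mul_im, mul_re] at him hre
    have hre0 : z.re ≠ 0 := by rintro h; nlinarith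
    exact (mul_eq_zero.mp (by linarith : z.re * z.im = 0)).resolve_left hre0
  · have hre : z.re ≠ 0 := fun h => hz (ext h him)
    simp only [sq, mul_im, mul_re, him]
    constructor
    · ring
    · simpa using mul_self_pos.mpr hre

end Complex

theorem isRoot_sq_iff_isRoot_add_inv {K : Type*} [Field K] {p q : K[X]}
    (hrep : ∀ z : K, z ≠ 0 → p.eval (z ^ 2) = z ^ q.natDegree * q.eval (z + z⁻¹))
    {z : K} (hz : z ≠ 0) : p.IsRoot (z ^ 2) ↔ q.IsRoot (z + z⁻¹) := by
  rw [IsRoot, IsRoot, hrep z hz, mul_eq_zero, or_iff_right (pow_ne_zero _ hz)]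

theorem roots_circle_union_posReal_iff_roots_real_general
    (p q : Polynomial ℂ) (hp : p ≠ 0)
    (hself : ∀ z : ℂ, z ≠ 0 → z ^ p.natDegree * p.eval z⁻¹ = p.eval z)
    (hrep : ∀ z : ℂ, z ≠ 0 → p.eval (z ^ 2) = z ^ q.natDegree * q.eval (z + z⁻¹)) :
    (∀ μ : ℂ, p.IsRoot μ → ‖μ‖ = 1 ∨ (μ.im = 0 ∧ 0 < μ.re)) ↔
      (∀ lam : ℂ, q.IsRoot lam → lam.im = 0) := by
  constructor
  · intro hP lam hlam
    obtain ⟨z, hz, rfl⟩ := IsAlgClosed.exists_add_inv_eq lam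
    have hroot := (isRoot_sq_iff_isRoot_add_inv hrep hz).mpr hlam
    exact (Complex.im_add_inv_eq_zero_iff z).mpr
      ((Complex.sq_mem_circle_or_posReal_iff hz).mp (hP _ hroot))
  · intro hQ μ hμ
    have hμ0 : μ ≠ 0 := by
      rintro rfl
      exact eval_zero_ne_zero_of_reverse_eq_self hp (reverse_eq_self_of_eval_inv hself) hμ
    obtain ⟨z, rfl⟩ := IsAlgClosed.exists_pow_nat_eq μ two_pos
    have hz : z ≠ 0 := by rintro rfl; simp at hμ0
    have hroot := (isRoot_sq_iff_isRoot_add_inv hrep hz).mp hμ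
    exact (Complex.sq_mem_circle_or_posReal_iff hz).mpr
      ((Complex.im_add_inv_eq_zero_iff z).mp (hQ _ hroot))

/-- Let `p`, `q` be polynomials with `p(T²) = T^{deg q}·q(T + T⁻¹)` and `p`
self-reciprocal. Then all roots of `p` lie in `S¹ ∪ ℝ₊` if and only if all
roots of `q` are real. -/
theorem roots_circle_union_posReal_iff_roots_real
    (p q : Polynomial ℂ) (hp : p ≠ 0) (hq : q ≠ 0)
    (hself : ∀ z : ℂ, z ≠ 0 → z ^ p.natDegree * p.eval z⁻¹ = p.eval z)
    (hrep : ∀ z : ℂ, z ≠ 0 → p.eval (z ^ 2) = z ^ q.natDegree * q.eval (z + z⁻¹)) :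
    (∀ μ : ℂ, p.IsRoot μ → ‖μ‖ = 1 ∨ (μ.im = 0 ∧ 0 < μ.re)) ↔
      (∀ lam : ℂ, q.IsRoot lam → lam.im = 0) :=
  roots_circle_union_posReal_iff_roots_real_general p q hp hself hrep
end

section
/- Define the sequence of polynomials χ_n ∈ ℤ[T] by the explicit initial values χ_0=1, χ_1=T+1, χ_2=T²+T+1, χ_3=T³+T²+T+1, χ_4=T⁴+T³+T+1, χ_5=T⁵+T⁴+T+1 and the recursion χ_n = (1+T)χ_{n−1} − T(1+T)χ_{n−3} + T²(1+T)χ_{n−5} − T³χ_{n−6} for n ≥ 6. Then for all n ≥ 6, χ_n = T^n + T^{n−1} − T³ χ_{n−6} + T + 1. -/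
open Polynomial

/-- The Coxeter polynomials `χ_n` of the algebras `R_n`, defined by the
explicit initial values and the six-step recursion
`χ_n = (1+T)χ_{n−1} − T(1+T)χ_{n−3} + T²(1+T)χ_{n−5} − T³χ_{n−6}`. -/
noncomputable def chiR : ℕ → Polynomial ℤ
  | 0 => 1
  | 1 => Polynomial.X + 1
  | 2 => Polynomial.X ^ 2 + Polynomial.X + 1
  | 3 => Polynomial.X ^ 3 + Polynomial.X ^ 2 + Polynomial.X + 1
  | 4 => Polynomial.X ^ 4 + Polynomial.X ^ 3 + Polynomial.X + 1
  | 5 => Polynomial.X ^ 5 + Polynomial.X ^ 4 + Polynomial.X + 1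
  | (n + 6) =>
      (1 + Polynomial.X) * chiR (n + 5) -
        Polynomial.X * (1 + Polynomial.X) * chiR (n + 3) +
        Polynomial.X ^ 2 * (1 + Polynomial.X) * chiR (n + 1) -
        Polynomial.X ^ 3 * chiR n

lemma chiR_add6 (n : ℕ) : chiR (n + 6) =
    (1 + X) * chiR (n + 5) - X * (1 + X) * chiR (n + 3) +
      X ^ 2 * (1 + X) * chiR (n + 1) - X ^ 3 * chiR n := by
  rw [chiR]

lemma chiR_aux : ∀ m : ℕ, chiR (m + 6) =
    X ^ (m + 6) + X ^ (m + 5) - X ^ 3 * chiR m + X + 1 := by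
  intro m
  induction m using Nat.strong_induction_on with
  | _ m ih =>
    match m, ih with
    | 0, _ => rw [chiR_add6]; simp only [chiR]; ring
    | 1, _ => rw [chiR_add6]; simp only [chiR]; ring
    | 2, _ => rw [chiR_add6]; simp only [chiR]; ring
    | 3, _ => rw [chiR_add6]; simp only [chiR]; ring
    | 4, _ => rw [chiR_add6]; simp only [chiR]; ring
    | 5, _ => rw [chiR_add6]; simp only [chiR]; ring
    | (k + 6), ih =>
      have h1 := ih (k + 5) (by omega)
      have h3 := ih (k + 3) (by omega)
      have h5 := ih (k + 1) (by omega)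
      have h6 := ih k (by omega)
      have hrec := chiR_add6 (k + 6)
      rw [hrec, show k + 6 + 5 = k + 5 + 6 from by omega,
        show k + 6 + 3 = k + 3 + 6 from by omega, show k + 6 + 1 = k + 1 + 6 from by omega,
        h1, h3, h5]
      have hB := (chiR_add6 k).symm.trans h6
      linear_combination (-(X : Polynomial ℤ) ^ 3) * hB

/-- For all `n ≥ 6`, `χ_n = T^n + T^{n−1} − T³·χ_{n−6} + T + 1`. -/
theorem chiR_six_step (n : ℕ) (hn : 6 ≤ n) :
    chiR n = Polynomial.X ^ n + Polynomial.X ^ (n - 1) -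
      Polynomial.X ^ 3 * chiR (n - 6) + Polynomial.X + 1 := by
  obtain ⟨m, rfl⟩ : ∃ m, n = m + 6 := ⟨n - 6, by omega⟩
  have := chiR_aux m
  simpa [show m + 6 - 1 = m + 5 from by omega] using this
end

section
/- Let p_n, p_{n−1} be monic real polynomials of degrees n, n−1 with all roots real, with no common roots, whose roots interlace (between any two consecutive roots of p_n there is exactly one root of p_{n−1}). If λ_1 < ⋯ < λ_s are the roots of p_n exceeding 2 and λ'_1 < ⋯ < λ'_t those of p_{n−1} exceeding 2, then t ∈ {s−1, s} and λ_i ≤ λ'_i ≤ λ_{i+1} up to the appropriate offset; consequently ∏_{j=1}^{t} φ(λ'_j) ≤ ∏_{i=1}^{s} φ(λ_i) for any increasing function φ ≥ 1 on (2,∞), with equality only if s = 0. -/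
/-!
Since `b j < a (j + 1)`, the shift `j ↦ j + 1` maps the indices of the roots `b j > 2`
injectively into those of the roots `a i > 2`; conversely, for every such `i` other than the
smallest one, `2 < a (i - 1) < b (i - 1)`, which gives the count. Along the shift each factor
grows, `φ (b j) < φ (a (j + 1))`, and the roots `a i > 2` missed by the shift contribute factors
`φ (a i) > 1`; as soon as some `a i > 2`, one of the two effects is present, so the inequality
is strict.
-/

open Finset

theorem Finset.prod_lt_prod_of_ssubset_of_one_lt {ι R : Type*} [CommSemiring R] [PartialOrder R]
    [IsStrictOrderedRing R] {s t : Finset ι} {f : ι → R} (hst : s ⊂ t)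
    (hf : ∀ i ∈ t, 1 < f i) : ∏ i ∈ s, f i < ∏ i ∈ t, f i := by
  classical
  obtain ⟨x, hxt, hxs⟩ := exists_of_ssubset hst
  have hpos : ∀ i ∈ t, 0 < f i := fun i hi => zero_lt_one.trans (hf i hi)
  calc ∏ i ∈ s, f i
      < f x * ∏ i ∈ s, f i :=
        lt_mul_of_one_lt_left (prod_pos fun i hi => hpos i (hst.subset hi)) (hf x hxt)
    _ = ∏ i ∈ insert x s, f i := (prod_insert hxs).symm
    _ ≤ ∏ i ∈ t, f i :=
        prod_le_prod_of_subset_of_one_le (insert_subset hxt hst.subset)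
          (fun i hi => (hpos i (insert_subset hxt hst.subset hi)).le) fun i hi _ => (hf i hi).le

theorem StrictMonoOn.one_lt_of_one_le {φ : ℝ → ℝ} {c x : ℝ}
    (hφ : StrictMonoOn φ (Set.Ioi c)) (hφ1 : ∀ y, c < y → 1 ≤ φ y) (hx : c < x) :
    1 < φ x :=
  (hφ1 _ (by linarith : c < (c + x) / 2)).trans_lt <|
    hφ (by simp only [Set.mem_Ioi]; linarith) hx (by linarith)

section Interlacing

variable {n : ℕ} {a b : ℕ → ℝ} {c : ℝ}

theorem succ_mem_filter_of_lt_succ (hba : ∀ j < n - 1, b j < a (j + 1)) {j : ℕ}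
    (hj : j ∈ (range (n - 1)).filter (c < b ·)) : j + 1 ∈ (range n).filter (c < a ·) := by
  simp only [mem_filter, mem_range] at hj ⊢
  exact ⟨by omega, hj.2.trans (hba j hj.1)⟩

theorem pred_mem_filter_of_lt (ha : MonotoneOn a (Set.Iio n)) (hab : ∀ j < n - 1, a j < b j)
    {k i : ℕ} (hk : k ∈ (range n).filter (c < a ·)) (hi : i ∈ (range n).filter (c < a ·))
    (hki : k < i) : i - 1 ∈ (range (n - 1)).filter (c < b ·) := by
  simp only [mem_filter, mem_range] at hk hi ⊢
  have hpred : i - 1 < n - 1 := by omega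
  refine ⟨hpred, ?_⟩
  calc c < a k := hk.2
    _ ≤ a (i - 1) := ha (Set.mem_Iio.2 hk.1) (Set.mem_Iio.2 (by omega)) (by omega)
    _ < b (i - 1) := hab _ hpred

theorem card_filter_le_card_filter_of_lt_succ (hba : ∀ j < n - 1, b j < a (j + 1)) :
    #((range (n - 1)).filter (c < b ·)) ≤ #((range n).filter (c < a ·)) :=
  card_le_card_of_injOn (· + 1) (fun _ hj => succ_mem_filter_of_lt_succ hba hj)
    (add_left_injective 1).injOn

theorem card_filter_le_card_filter_add_one (ha : MonotoneOn a (Set.Iio n))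
    (hab : ∀ j < n - 1, a j < b j) :
    #((range n).filter (c < a ·)) ≤ #((range (n - 1)).filter (c < b ·)) + 1 := by
  set S := (range n).filter (c < a ·)
  rcases S.eq_empty_or_nonempty with hS | hS
  · simp [hS]
  have hk := S.min'_mem hS
  have hlt : ∀ i ∈ S.erase (S.min' hS), S.min' hS < i := fun i hi =>
    S.min'_lt_of_mem_erase_min' hS hi
  have hcard : #(S.erase (S.min' hS)) ≤ #((range (n - 1)).filter (c < b ·)) :=
    card_le_card_of_injOn (· - 1)
      (fun i hi => pred_mem_filter_of_lt ha hab hk (mem_of_mem_erase hi) (hlt i hi))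
      fun i hi j hj h => by
        have := hlt i hi; have := hlt j hj; simp only at h; omega
  rw [card_erase_of_mem hk] at hcard
  omega

variable {φ : ℝ → ℝ}

theorem prod_filter_lt_prod_filter (hba : ∀ j < n - 1, b j < a (j + 1))
    (hφ : StrictMonoOn φ (Set.Ioi c)) (hφ1 : ∀ x, c < x → 1 ≤ φ x)
    (hS : ((range n).filter (c < a ·)).Nonempty) :
    ∏ j ∈ (range (n - 1)).filter (c < b ·), φ (b j) <
      ∏ i ∈ (range n).filter (c < a ·), φ (a i) := by
  set S := (range n).filter (c < a ·)
  set T := (range (n - 1)).filter (c < b ·)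
  have hTS : T.image (· + 1) ⊆ S :=
    image_subset_iff.2 fun _ hj => succ_mem_filter_of_lt_succ hba hj
  have hbc : ∀ j ∈ T, c < b j := fun j hj => (mem_filter.1 hj).2
  have hba' : ∀ j ∈ T, b j < a (j + 1) := fun j hj => hba j (mem_range.1 (mem_filter.1 hj).1)
  have hpos : ∀ j ∈ T, 0 < φ (b j) := fun j hj => zero_lt_one.trans_le (hφ1 _ (hbc j hj))
  have hstep : ∀ j ∈ T, φ (b j) < φ (a (j + 1)) := fun j hj =>
    hφ (hbc j hj) ((hbc j hj).trans (hba' j hj)) (hba' j hj)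
  have hshift : ∏ j ∈ T, φ (a (j + 1)) = ∏ i ∈ T.image (· + 1), φ (a i) :=
    (prod_image (f := fun i => φ (a i)) (add_left_injective 1).injOn).symm
  rcases hTS.eq_or_ssubset with hTS | hTS
  · have hT : T.Nonempty := image_nonempty.1 (hTS ▸ hS)
    calc ∏ j ∈ T, φ (b j) < ∏ j ∈ T, φ (a (j + 1)) :=
          prod_lt_prod_of_nonempty hpos hstep hT
      _ = ∏ i ∈ S, φ (a i) := by rw [hshift, hTS]
  · calc ∏ j ∈ T, φ (b j) ≤ ∏ j ∈ T, φ (a (j + 1)) :=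
          prod_le_prod (fun j hj => (hpos j hj).le) fun j hj => (hstep j hj).le
      _ = ∏ i ∈ T.image (· + 1), φ (a i) := hshift
      _ < ∏ i ∈ S, φ (a i) :=
          prod_lt_prod_of_ssubset_of_one_lt hTS fun i hi =>
            hφ.one_lt_of_one_le hφ1 (mem_filter.1 hi).2

end Interlacing

theorem interlacing_prod_le_general (n : ℕ) (a b : ℕ → ℝ)
    (ha : ∀ i, i + 1 < n → a i < a (i + 1))
    (hinter : ∀ j, j < n - 1 → a j < b j ∧ b j < a (j + 1)) :
    (((Finset.range (n - 1)).filter (fun j => 2 < b j)).card =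
        ((Finset.range n).filter (fun i => 2 < a i)).card ∨
      ((Finset.range (n - 1)).filter (fun j => 2 < b j)).card + 1 =
        ((Finset.range n).filter (fun i => 2 < a i)).card) ∧
    ∀ φ : ℝ → ℝ, StrictMonoOn φ (Set.Ioi (2 : ℝ)) → (∀ x, 2 < x → 1 ≤ φ x) →
      (∏ j ∈ (Finset.range (n - 1)).filter (fun j => 2 < b j), φ (b j)) ≤
        (∏ i ∈ (Finset.range n).filter (fun i => 2 < a i), φ (a i)) ∧
      ((∏ j ∈ (Finset.range (n - 1)).filter (fun j => 2 < b j), φ (b j)) =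
          (∏ i ∈ (Finset.range n).filter (fun i => 2 < a i), φ (a i)) →
        (Finset.range n).filter (fun i => 2 < a i) = ∅) := by
  have hmono : StrictMonoOn a (Set.Iio n) :=
    strictMonoOn_of_lt_succ Set.ordConnected_Iio fun i _ _ hi => ha i hi
  have hab : ∀ j < n - 1, a j < b j := fun j hj => (hinter j hj).1
  have hba : ∀ j < n - 1, b j < a (j + 1) := fun j hj => (hinter j hj).2
  have hle := card_filter_le_card_filter_of_lt_succ (c := 2) hba
  have hge := card_filter_le_card_filter_add_one (c := 2) hmono.monotoneOn hab
  refine ⟨by omega, fun φ hφ hφ1 => ?_⟩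
  rcases ((range n).filter (2 < a ·)).eq_empty_or_nonempty with hS | hS
  · have hT : (range (n - 1)).filter (2 < b ·) = ∅ := by
      rw [hS, card_empty] at hle
      exact card_eq_zero.1 (Nat.le_zero.1 hle)
    simp [hS, hT]
  · have hlt := prod_filter_lt_prod_filter hba hφ hφ1 hS
    exact ⟨hlt.le, fun h => absurd h hlt.ne⟩

/-- Interlacing and monotone products: let `p, q` be monic real polynomials of
degrees `n`, `n−1` whose roots `a 0 < ⋯ < a (n−1)` and `b 0 < ⋯ < b (n−2)` are
all real, share no common root, and strictly interlace
(`a j < b j < a (j+1)`). If `S` indexes the roots of `p` exceeding `2` and `T`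
those of `q` exceeding `2`, then `#T ∈ {#S − 1, #S}` and for every increasing
function `φ ≥ 1` on `(2, ∞)` one has `∏_{j ∈ T} φ(b j) ≤ ∏_{i ∈ S} φ(a i)`,
with equality only if `S = ∅`. -/
theorem interlacing_prod_le (n : ℕ) (hn : 1 ≤ n) (a b : ℕ → ℝ)
    (p q : Polynomial ℝ)
    (hp : p = ∏ i ∈ Finset.range n, (Polynomial.X - Polynomial.C (a i)))
    (hq : q = ∏ j ∈ Finset.range (n - 1), (Polynomial.X - Polynomial.C (b j)))
    (ha : ∀ i, i + 1 < n → a i < a (i + 1))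
    (hinter : ∀ j, j < n - 1 → a j < b j ∧ b j < a (j + 1)) :
    (((Finset.range (n - 1)).filter (fun j => 2 < b j)).card =
        ((Finset.range n).filter (fun i => 2 < a i)).card ∨
      ((Finset.range (n - 1)).filter (fun j => 2 < b j)).card + 1 =
        ((Finset.range n).filter (fun i => 2 < a i)).card) ∧
    ∀ φ : ℝ → ℝ, StrictMonoOn φ (Set.Ioi (2 : ℝ)) → (∀ x, 2 < x → 1 ≤ φ x) →
      (∏ j ∈ (Finset.range (n - 1)).filter (fun j => 2 < b j), φ (b j)) ≤
        (∏ i ∈ (Finset.range n).filter (fun i => 2 < a i), φ (a i)) ∧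
      ((∏ j ∈ (Finset.range (n - 1)).filter (fun j => 2 < b j), φ (b j)) =
          (∏ i ∈ (Finset.range n).filter (fun i => 2 < a i), φ (a i)) →
        (Finset.range n).filter (fun i => 2 < a i) = ∅) :=
  interlacing_prod_le_general n a b ha hinter
end
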